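/- arXiv:2011.03855 — 3 statements merged into one kernel-verified Lean document; each statement's English description precedes it below -/
import Mathlib

section
/- Forward direction of the Ebenfelt–Khavinson–Shapiro theorem on fingerprints of polynomial lemniscates. Let n ≥ 1 and let P ∈ ℂ[X] be a polynomial of degree n whose leading coefficient is a positive real number, and set Γ = {z ∈ ℂ : |P(z)| = 1}. Suppose (φ₋, φ₊) is a conformal parametrization pair for Γ and every root of P lies in Ω₋ = φ₋(𝔻). Then there exist points a_1, …, a_n ∈ 𝔻 whose images φ₋(a_1), …, φ₋(a_n) are exactly the roots of P counted with multiplicity, and a constant λ ∈ ℂ with |λ| = 1, such that for all z, w ∈ ℂ with |z| = |w| = 1 and φ₊(w) = φ₋(z) one has wⁿ = λ·∏_{k=1}^n (z − a_k)/(1 − conj(a_k)·z); that is, the fingerprint k of Γ satisfies k(z)ⁿ = B(z), where B is the finite Blaschke product of degree n with zeros a_1, …, a_n. -/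
/-!
Write `B` for the Blaschke product with zeros `aₖ = φ₋⁻¹(rₖ)`, the preimages of the roots `rₖ`
of `P`. Inside, `P ∘ φ₋ = c ∏ (φ₋ z - φ₋ aₖ)` vanishes exactly at the `aₖ`, and simply there
because an injective holomorphic map has nonvanishing derivative; so `(P ∘ φ₋) / B` is
holomorphic and zero-free on the closed disk with modulus `1` on the circle, hence a unimodular
constant `λ`. Outside, `P` has no zeros and `P(φ₊ w) / wⁿ` tends to `c dⁿ ≠ 0` at infinity; the
same maximum/minimum modulus argument, after `w ↦ 1/w`, makes it a unimodular constant `μ`.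
On the circle, `φ₊ w = φ₋ z` then gives `μ wⁿ = λ B(z)`.
-/

open Complex Metric Set Polynomial

/-- A conformal parametrization pair for a Jordan curve `Γ ⊂ ℂ`:
`φm` maps the closed unit disk onto the closure of the bounded complementary
component (conformally inside), `φp` maps the closed exterior of the unit disk
onto the closure of the unbounded component, normalized at infinity. -/
structure ConformalPair (Γ : Set ℂ) (φm φp : ℂ → ℂ) : Prop where
  contm : ContinuousOn φm (closedBall 0 1)
  injm : InjOn φm (closedBall 0 1)
  holm : DifferentiableOn ℂ φm (ball 0 1)
  mapm : φm '' (sphere 0 1) = Γ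
  contp : ContinuousOn φp {w : ℂ | 1 ≤ ‖w‖}
  injp : InjOn φp {w : ℂ | 1 ≤ ‖w‖}
  holp : DifferentiableOn ℂ φp {w : ℂ | 1 < ‖w‖}
  mapp : φp '' (sphere 0 1) = Γ
  deriv_infty : ∃ d : ℝ, 0 < d ∧
    Filter.Tendsto (fun w => φp w / w) (Bornology.cobounded ℂ) (nhds (d : ℂ))
  disj_mp : Disjoint (φm '' ball 0 1) (φp '' {w : ℂ | 1 < ‖w‖})
  disj_mG : Disjoint (φm '' ball 0 1) Γ
  disj_pG : Disjoint (φp '' {w : ℂ | 1 < ‖w‖}) Γ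
  union_eq : φm '' ball 0 1 ∪ Γ ∪ φp '' {w : ℂ | 1 < ‖w‖} = univ

open Filter Bornology ComplexConjugate
open scoped Topology

lemma not_injOn_pow_of_hasStrictDerivAt {σ : ℂ → ℂ} {σ' a : ℂ} (hσ : HasStrictDerivAt σ σ' a)
    (hσ' : σ' ≠ 0) (hσa : σ a = 0) {m : ℕ} (hm : 2 ≤ m) {s : Set ℂ} (hs : s ∈ 𝓝 a) :
    ¬ InjOn (fun z => σ z ^ m) s := by
  intro hinj
  have hζ := Complex.isPrimitiveRoot_exp m (by omega)
  set ζ := Complex.exp (2 * Real.pi * I / m)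
  have himage : ∀ᶠ w in 𝓝 (0 : ℂ), w ∈ σ '' s := by
    rw [← hσa, ← hσ.map_nhds_eq hσ']
    exact image_mem_map hs
  -- `σ` covers a neighbourhood of `0`, so for small `w ≠ 0` both `w` and `ζ w` are values of `σ`
  have hrot : Tendsto (ζ * ·) (𝓝 0) (𝓝 0) := by
    simpa using (continuous_const_mul ζ).tendsto 0
  obtain ⟨w, ⟨⟨z₁, hz₁, hσz₁⟩, ⟨z₂, hz₂, hσz₂⟩⟩, hw⟩ :=
    (((himage.and (hrot.eventually himage)).filter_mono nhdsWithin_le_nhds).and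
      (self_mem_nhdsWithin : {w : ℂ | w ≠ 0} ∈ 𝓝[≠] 0)).exists
  have hpow : σ z₁ ^ m = σ z₂ ^ m := by rw [hσz₁, hσz₂, mul_pow, hζ.pow_eq_one, one_mul]
  have hne : σ z₁ ≠ σ z₂ := by
    rw [hσz₁, hσz₂]
    intro h
    exact hζ.ne_one (by omega) (mul_right_cancel₀ hw (by rw [one_mul]; exact h.symm))
  exact hne (congrArg σ (hinj hz₁ hz₂ hpow))

lemma AnalyticAt.exists_pow_eq {h : ℂ → ℂ} {a : ℂ} (hh : AnalyticAt ℂ h a) (ha : h a ≠ 0)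
    {m : ℕ} (hm : m ≠ 0) : ∃ r : ℂ → ℂ, AnalyticAt ℂ r a ∧ r a ≠ 0 ∧ ∀ z, r z ^ m = h z := by
  obtain ⟨c, hc⟩ := IsAlgClosed.exists_pow_nat_eq (h a) (Nat.pos_of_ne_zero hm)
  -- normalising by `h a` keeps the base of the power near `1`, where `cpow` is analytic
  refine ⟨fun z => c * (h z / h a) ^ (m⁻¹ : ℂ), ?_, ?_, fun z => ?_⟩
  · refine analyticAt_const.mul ((hh.div analyticAt_const ha).cpow analyticAt_const ?_)
    simp [div_self ha]
  · have hc0 : c ≠ 0 := by rintro rfl; simp [zero_pow hm] at hc; exact ha hc.symm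
    simp [div_self ha, hc0]
  · rw [mul_pow, Complex.cpow_nat_inv_pow _ hm, hc, mul_div_cancel₀ _ ha]

lemma deriv_ne_zero_of_injOn {f : ℂ → ℂ} {s : Set ℂ} {a : ℂ} (hs : IsOpen s) (ha : a ∈ s)
    (hf : DifferentiableOn ℂ f s) (hinj : InjOn f s) : deriv f a ≠ 0 := by
  intro hda
  have hg : AnalyticAt ℂ (fun z => f z - f a) a :=
    (hf.analyticAt (hs.mem_nhds ha)).sub analyticAt_const
  have hnotzero : ¬ ∀ᶠ z in 𝓝 a, f z - f a = 0 := by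
    intro h
    obtain ⟨z, ⟨hz0, hzs⟩, hza⟩ :=
      (((h.and (hs.mem_nhds ha)).filter_mono nhdsWithin_le_nhds).and
        (self_mem_nhdsWithin : {z : ℂ | z ≠ a} ∈ 𝓝[≠] a)).exists
    exact hza (hinj hzs ha (sub_eq_zero.mp hz0))
  obtain ⟨m, h, hh, hha, hgh⟩ := hg.exists_eventuallyEq_pow_smul_nonzero_iff.mpr hnotzero
  have hm : 2 ≤ m := by
    by_contra! hm
    interval_cases m
    · simpa [hha] using (hgh.self_of_nhds).symm
    · have hderiv : HasDerivAt (fun z => (z - a) ^ 1 • h z) (h a) a := by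
        simpa using ((hasDerivAt_id a).sub_const a).fun_mul hh.differentiableAt.hasDerivAt
      have := (hderiv.congr_of_eventuallyEq hgh).deriv
      rw [deriv_sub_const, hda] at this
      exact hha this.symm
  obtain ⟨r, hr, hra, hrh⟩ := hh.exists_pow_eq hha (by omega : m ≠ 0)
  have hσ : HasStrictDerivAt (fun z => (z - a) * r z) (r a) a := by
    have hlin : HasStrictDerivAt (fun z => z - a) 1 a := (hasStrictDerivAt_id a).sub_const a
    simpa using hlin.fun_mul hr.hasStrictDerivAt
  refine not_injOn_pow_of_hasStrictDerivAt hσ hra (by simp) hm (inter_mem (hs.mem_nhds ha) hgh) ?_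
  rintro z₁ ⟨hz₁, hgz₁⟩ z₂ ⟨hz₂, hgz₂⟩ heq
  refine hinj hz₁ hz₂ (sub_left_injective (b := f a) ?_)
  rw [mem_ofPred_eq] at hgz₁ hgz₂
  simp only [hgz₁, hgz₂, smul_eq_mul, ← hrh, ← mul_pow]
  exact heq

lemma dslope_ne_zero_of_injOn {f : ℂ → ℂ} {U s : Set ℂ} {a z : ℂ} (hU : IsOpen U) (hUs : U ⊆ s)
    (ha : a ∈ U) (hf : DifferentiableOn ℂ f U) (hinj : InjOn f s) (hz : z ∈ s) :
    dslope f a z ≠ 0 := by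
  rcases eq_or_ne z a with rfl | hza
  · rw [dslope_same]
    exact deriv_ne_zero_of_injOn hU ha hf (hinj.mono hUs)
  · rw [dslope_of_ne f hza, slope_def_field]
    exact div_ne_zero (sub_ne_zero.mpr fun h => hza (hinj hz (hUs ha) h)) (sub_ne_zero.mpr hza)

lemma DiffContOnCl.norm_eq_one_of_frontier {F : ℂ → ℂ} {U : Set ℂ} (hU : IsBounded U)
    (hF : DiffContOnCl ℂ F U) (h0 : ∀ z ∈ closure U, F z ≠ 0)
    (h1 : ∀ z ∈ frontier U, ‖F z‖ = 1) {z : ℂ} (hz : z ∈ closure U) : ‖F z‖ = 1 := by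
  have hle : ‖F z‖ ≤ 1 :=
    Complex.norm_le_of_forall_mem_frontier_norm_le hU hF (fun w hw => (h1 w hw).le) hz
  have hinv : DiffContOnCl ℂ (fun z => (F z)⁻¹) U :=
    ⟨hF.1.inv fun w hw => h0 w (subset_closure hw), hF.2.inv₀ h0⟩
  have hinv_le : ‖(F z)⁻¹‖ ≤ 1 := Complex.norm_le_of_forall_mem_frontier_norm_le hU hinv
    (fun w hw => by rw [norm_inv, h1 w hw, inv_one]) hz
  rw [norm_inv] at hinv_le
  exact le_antisymm hle ((inv_le_one₀ (norm_pos_iff.mpr (h0 z hz))).mp hinv_le)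

lemma DiffContOnCl.eqOn_closure_of_frontier {F : ℂ → ℂ} {U : Set ℂ} (hU : IsBounded U)
    (hUo : IsOpen U) (hUc : IsPreconnected U) (hF : DiffContOnCl ℂ F U)
    (h0 : ∀ z ∈ closure U, F z ≠ 0) (h1 : ∀ z ∈ frontier U, ‖F z‖ = 1) {c : ℂ} (hc : c ∈ U) :
    EqOn F (Function.const ℂ (F c)) (closure U) := by
  have hnorm z (hz : z ∈ closure U) := hF.norm_eq_one_of_frontier hU h0 h1 hz
  refine Complex.eqOn_closure_of_isPreconnected_of_isMaxOn_norm hUc hUo hF hc fun z hz => ?_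
  simp [hnorm z (subset_closure hz), hnorm c (subset_closure hc)]

lemma eqOn_closedBall_of_norm_eq_one {F : ℂ → ℂ} (hF : DiffContOnCl ℂ F (ball 0 1))
    (h0 : ∀ z ∈ closedBall (0 : ℂ) 1, F z ≠ 0) (h1 : ∀ z ∈ sphere (0 : ℂ) 1, ‖F z‖ = 1) :
    ‖F 0‖ = 1 ∧ EqOn F (Function.const ℂ (F 0)) (closedBall 0 1) := by
  rw [← closure_ball 0 one_ne_zero] at h0 ⊢
  rw [← frontier_ball 0 one_ne_zero] at h1
  exact ⟨hF.norm_eq_one_of_frontier isBounded_ball h0 h1 (subset_closure (mem_ball_self one_pos)),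
    hF.eqOn_closure_of_frontier isBounded_ball isOpen_ball (convex_ball 0 1).isPreconnected h0 h1
      (mem_ball_self one_pos)⟩

noncomputable def blaschkeProduct {ι : Type*} [Fintype ι] (a : ι → ℂ) (z : ℂ) : ℂ :=
  ∏ k, (z - a k) / (1 - conj (a k) * z)

lemma one_sub_conj_mul_ne_zero {a z : ℂ} (ha : ‖a‖ < 1) (hz : ‖z‖ ≤ 1) : 1 - conj a * z ≠ 0 := by
  rw [sub_ne_zero]
  intro h
  have : ‖conj a * z‖ < 1 := by
    rw [norm_mul, RCLike.norm_conj]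
    exact mul_lt_one_of_nonneg_of_lt_one_left (norm_nonneg _) ha hz
  simp [← h] at this

lemma norm_one_sub_conj_mul_of_norm_eq_one (a : ℂ) {z : ℂ} (hz : ‖z‖ = 1) :
    ‖1 - conj a * z‖ = ‖z - a‖ := by
  have hzz : conj z * z = 1 := by
    rw [Complex.conj_mul', hz]; norm_num
  have h : conj z * (1 - conj a * z) = conj (z - a) := by
    rw [map_sub]
    linear_combination (-conj a) * hzz
  have := congrArg norm h
  rwa [norm_mul, RCLike.norm_conj, RCLike.norm_conj, hz, one_mul] at this

lemma norm_blaschkeProduct_of_norm_eq_one {ι : Type*} [Fintype ι] {a : ι → ℂ}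
    (ha : ∀ k, ‖a k‖ < 1) {z : ℂ} (hz : ‖z‖ = 1) : ‖blaschkeProduct a z‖ = 1 := by
  rw [blaschkeProduct, norm_prod]
  refine Finset.prod_eq_one fun k _ => ?_
  rw [norm_div, norm_one_sub_conj_mul_of_norm_eq_one _ hz, div_self]
  rw [← norm_one_sub_conj_mul_of_norm_eq_one _ hz, norm_ne_zero_iff]
  exact one_sub_conj_mul_ne_zero (ha k) hz.le

lemma exists_prod_sub_eq_mul_blaschkeProduct {φ : ℂ → ℂ} (hφc : ContinuousOn φ (closedBall 0 1))
    (hφi : InjOn φ (closedBall 0 1)) (hφd : DifferentiableOn ℂ φ (ball 0 1))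
    {ι : Type*} [Fintype ι] {a : ι → ℂ} (ha : ∀ k, a k ∈ ball (0 : ℂ) 1) {c : ℂ} (hc : c ≠ 0)
    (h1 : ∀ z ∈ sphere (0 : ℂ) 1, ‖c * ∏ k, (φ z - φ (a k))‖ = 1) :
    ∃ lam : ℂ, ‖lam‖ = 1 ∧
      ∀ z ∈ closedBall (0 : ℂ) 1, c * ∏ k, (φ z - φ (a k)) = lam * blaschkeProduct a z := by
  have hden {z : ℂ} (hz : z ∈ closedBall (0 : ℂ) 1) (k : ι) : 1 - conj (a k) * z ≠ 0 :=
    one_sub_conj_mul_ne_zero (mem_ball_zero_iff.mp (ha k)) (mem_closedBall_zero_iff.mp hz)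
  set F : ℂ → ℂ := fun z => c * ∏ k, dslope φ (a k) z * (1 - conj (a k) * z)
  have hF_mul {z : ℂ} (hz : z ∈ closedBall (0 : ℂ) 1) :
      c * ∏ k, (φ z - φ (a k)) = F z * blaschkeProduct a z := by
    rw [blaschkeProduct, mul_assoc, ← Finset.prod_mul_distrib]
    refine congrArg (c * ·) (Finset.prod_congr rfl fun k _ => ?_)
    rw [← sub_smul_dslope φ (a k) z, smul_eq_mul, mul_assoc, mul_div_cancel₀ _ (hden hz k),
      mul_comm]
  have hF : DiffContOnCl ℂ F (ball 0 1) := by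
    refine ⟨(differentiableOn_const c).mul (DifferentiableOn.fun_finsetProd fun k _ =>
      ((differentiableOn_dslope (isOpen_ball.mem_nhds (ha k))).mpr hφd).mul
        ((differentiableOn_const 1).sub (differentiableOn_id.const_mul _))), ?_⟩
    rw [closure_ball 0 one_ne_zero]
    refine continuousOn_const.mul (continuousOn_finsetProd _ fun k _ => ?_)
    refine ((continuousOn_dslope (closedBall_mem_nhds_of_mem (ha k))).mpr
      ⟨hφc, hφd.differentiableAt (isOpen_ball.mem_nhds (ha k))⟩).mul (by fun_prop)
  have hF0 : ∀ z ∈ closedBall (0 : ℂ) 1, F z ≠ 0 := fun z hz =>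
    mul_ne_zero hc (Finset.prod_ne_zero_iff.mpr fun k _ => mul_ne_zero
      (dslope_ne_zero_of_injOn isOpen_ball ball_subset_closedBall (ha k) hφd hφi hz) (hden hz k))
  have hF1 : ∀ z ∈ sphere (0 : ℂ) 1, ‖F z‖ = 1 := fun z hz => by
    have hB := norm_blaschkeProduct_of_norm_eq_one (fun k => mem_ball_zero_iff.mp (ha k))
      (mem_sphere_zero_iff_norm.mp hz)
    simpa [hB, hF_mul (sphere_subset_closedBall hz)] using h1 z hz
  obtain ⟨hF0_norm, hF_const⟩ := eqOn_closedBall_of_norm_eq_one hF hF0 hF1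
  exact ⟨F 0, hF0_norm, fun z hz => by rw [hF_mul hz, hF_const hz, Function.const_apply]⟩

lemma differentiableOn_update_of_tendsto {f : ℂ → ℂ} {s : Set ℂ} {c L : ℂ} (hs : s ∈ 𝓝 c)
    (hf : DifferentiableOn ℂ f (s \ {c})) (hL : Tendsto f (𝓝[≠] c) (𝓝 L)) :
    DifferentiableOn ℂ (Function.update f c L) s := by
  simpa only [hL.limUnder_eq] using Complex.differentiableOn_update_limUnder_of_isLittleO hs hf
    (hL.sub_const (f c)).norm.isBoundedUnder_le.isLittleO_sub_self_inv

lemma Polynomial.tendsto_eval_div_pow_natDegree {𝕜 : Type*} [NormedField 𝕜] (P : 𝕜[X]) :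
    Tendsto (fun z => P.eval z / z ^ P.natDegree) (cobounded 𝕜) (𝓝 P.leadingCoeff) := by
  have hrev : Tendsto (fun z => P.reverse.eval z⁻¹) (cobounded 𝕜) (𝓝 P.leadingCoeff) := by
    rw [← coeff_zero_reverse, coeff_zero_eq_eval_zero]
    exact (P.reverse.continuous.tendsto 0).comp tendsto_inv₀_cobounded
  refine hrev.congr' ((eventually_ne_cobounded 0).mono fun z hz => ?_)
  let := invertibleOfNonzero hz
  rw [eq_div_iff (pow_ne_zero _ hz), ← eval₂_id, ← eval₂_id, ← invOf_eq_inv,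
    eval₂_reverse_mul_pow]

lemma tendsto_cobounded_of_tendsto_div {𝕜 : Type*} [NormedField 𝕜] {f : 𝕜 → 𝕜} {d : 𝕜}
    (hd : d ≠ 0) (hf : Tendsto (fun w => f w / w) (cobounded 𝕜) (𝓝 d)) :
    Tendsto f (cobounded 𝕜) (cobounded 𝕜) := by
  rw [← tendsto_norm_atTop_iff_cobounded]
  refine (hf.norm.pos_mul_atTop (norm_pos_iff.mpr hd) tendsto_norm_cobounded_atTop).congr'
    ((eventually_ne_cobounded 0).mono fun w hw => ?_)
  rw [← norm_mul, div_mul_cancel₀ _ hw]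

lemma tendsto_eval_comp_div_pow {𝕜 : Type*} [NormedField 𝕜] {g : 𝕜 → 𝕜} {d : 𝕜} (hd : d ≠ 0)
    (hg : Tendsto (fun w => g w / w) (cobounded 𝕜) (𝓝 d)) (P : 𝕜[X]) :
    Tendsto (fun w => P.eval (g w) / w ^ P.natDegree) (cobounded 𝕜)
      (𝓝 (P.leadingCoeff * d ^ P.natDegree)) := by
  have hg_cob := tendsto_cobounded_of_tendsto_div hd hg
  refine ((P.tendsto_eval_div_pow_natDegree.comp hg_cob).mul (hg.pow _)).congr' ?_
  filter_upwards [hg_cob.eventually (eventually_ne_cobounded 0), eventually_ne_cobounded 0]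
    with w hgw hw
  rw [Function.comp_apply, div_pow, div_mul_div_comm, mul_comm (g w ^ _),
    mul_div_mul_right _ _ (pow_ne_zero _ hgw)]

lemma eq_of_tendsto_cobounded_of_norm_eq_one {H : ℂ → ℂ} {L : ℂ}
    (hd : DifferentiableOn ℂ H {w | 1 < ‖w‖}) (hc : ContinuousOn H {w | 1 ≤ ‖w‖})
    (hL : Tendsto H (cobounded ℂ) (𝓝 L)) (hL0 : L ≠ 0) (h0 : ∀ w, 1 ≤ ‖w‖ → H w ≠ 0)
    (h1 : ∀ w ∈ sphere (0 : ℂ) 1, ‖H w‖ = 1) {w : ℂ} (hw : 1 ≤ ‖w‖) : H w = L := by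
  set G := Function.update (fun u => H u⁻¹) 0 L
  have hG_ne {u : ℂ} (hu : u ≠ 0) : G u = H u⁻¹ := Function.update_of_ne hu _ _
  have hinv_lt : MapsTo (·⁻¹) (ball (0 : ℂ) 1 \ {0}) {w | 1 < ‖w‖} := fun u ⟨hu, hu0⟩ => by
    simpa [one_lt_inv₀ (norm_pos_iff.mpr hu0)] using hu
  have hinv_le : MapsTo (·⁻¹) (closedBall (0 : ℂ) 1 \ {0}) {w | 1 ≤ ‖w‖} := fun u ⟨hu, hu0⟩ => by
    simpa [one_le_inv₀ (norm_pos_iff.mpr hu0)] using hu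
  have hlim : Tendsto (fun u => H u⁻¹) (𝓝[≠] 0) (𝓝 L) := hL.comp tendsto_inv₀_nhdsNE_zero
  have hG : DiffContOnCl ℂ G (ball 0 1) := by
    refine ⟨differentiableOn_update_of_tendsto (ball_mem_nhds 0 one_pos)
      (hd.comp (fun u hu => (differentiableAt_inv hu.2).differentiableWithinAt) hinv_lt) hlim, ?_⟩
    rw [closure_ball 0 one_ne_zero, continuousOn_update_iff]
    refine ⟨hc.comp (fun u hu => (continuousAt_inv₀ hu.2).continuousWithinAt) hinv_le,
      fun _ => hlim.mono_left (nhdsWithin_mono _ fun u hu => hu.2)⟩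
  obtain ⟨-, hconst⟩ := eqOn_closedBall_of_norm_eq_one hG
    (fun u hu => by
      rcases eq_or_ne u 0 with rfl | hu0
      · simpa [G] using hL0
      · exact hG_ne hu0 ▸ h0 _ (hinv_le ⟨hu, hu0⟩))
    (fun u hu => by
      have hu0 : u ≠ 0 := ne_of_mem_sphere hu one_ne_zero
      rw [hG_ne hu0]
      exact h1 _ (by simpa using hu))
  have hw0 : w ≠ 0 := norm_pos_iff.mp (one_pos.trans_le hw)
  have := hconst (show w⁻¹ ∈ closedBall (0 : ℂ) 1 by simpa using inv_le_one_of_one_le₀ hw)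
  simpa [G, hG_ne (inv_ne_zero hw0)] using this

lemma exists_eval_comp_eq_mul_pow {φ : ℂ → ℂ} (hφc : ContinuousOn φ {w : ℂ | 1 ≤ ‖w‖})
    (hφd : DifferentiableOn ℂ φ {w : ℂ | 1 < ‖w‖})
    (hφ : ∃ d : ℝ, 0 < d ∧ Tendsto (fun w => φ w / w) (cobounded ℂ) (𝓝 (d : ℂ)))
    {P : ℂ[X]} (h0 : ∀ w : ℂ, 1 ≤ ‖w‖ → P.eval (φ w) ≠ 0)
    (h1 : ∀ w ∈ sphere (0 : ℂ) 1, ‖P.eval (φ w)‖ = 1) :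
    ∃ μ : ℂ, ‖μ‖ = 1 ∧ ∀ w ∈ sphere (0 : ℂ) 1, P.eval (φ w) = μ * w ^ P.natDegree := by
  obtain ⟨d, hd, hlim⟩ := hφ
  have hP : P ≠ 0 := by rintro rfl; exact h0 1 (by simp) eval_zero
  have hw0 {w : ℂ} (hw : 1 ≤ ‖w‖) : w ≠ 0 := norm_pos_iff.mp (one_pos.trans_le hw)
  set μ := P.leadingCoeff * (d : ℂ) ^ P.natDegree
  have hconst {w : ℂ} (hw : 1 ≤ ‖w‖) : P.eval (φ w) / w ^ P.natDegree = μ :=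
    eq_of_tendsto_cobounded_of_norm_eq_one (H := fun w => P.eval (φ w) / w ^ P.natDegree)
      ((P.differentiable.comp_differentiableOn hφd).div (differentiableOn_pow _)
        fun w hw => pow_ne_zero _ (hw0 hw.le))
      ((P.continuous.comp_continuousOn hφc).div (continuousOn_pow _)
        fun w hw => pow_ne_zero _ (hw0 hw))
      (tendsto_eval_comp_div_pow (ofReal_ne_zero.mpr hd.ne') hlim P)
      (mul_ne_zero (leadingCoeff_ne_zero.mpr hP) (pow_ne_zero _ (ofReal_ne_zero.mpr hd.ne')))
      (fun w hw => div_ne_zero (h0 w hw) (pow_ne_zero _ (hw0 hw)))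
      (fun w hw => by rw [norm_div, norm_pow, mem_sphere_zero_iff_norm.mp hw, one_pow, div_one,
        h1 w hw])
      hw
  refine ⟨μ, ?_, fun w hw => ?_⟩
  · have h := hconst (w := 1) (by simp)
    rw [one_pow, div_one] at h
    rw [← h, h1 1 (by simp)]
  · have hw1 := (mem_sphere_zero_iff_norm.mp hw).ge
    rw [← hconst hw1, div_mul_cancel₀ _ (pow_ne_zero _ (hw0 hw1))]

lemma Multiset.exists_fin_map_eq {α : Type*} (A : Multiset α) {n : ℕ} (hcard : card A = n) :
    ∃ a : Fin n → α, Finset.univ.val.map a = A := by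
  induction A using Quotient.inductionOn with
  | h l =>
    rw [quot_mk_to_coe, coe_card] at hcard
    subst hcard
    exact ⟨l.get, by rw [Fin.univ_val_map, List.ofFn_get]; rfl⟩

lemma Multiset.exists_map_eq_of_forall_mem_image {α β : Type*} {f : α → β} {s : Set α}
    {A : Multiset β} (hA : ∀ b ∈ A, b ∈ f '' s) :
    ∃ B : Multiset α, (∀ x ∈ B, x ∈ s) ∧ B.map f = A := by
  choose g hgs hgf using fun b : {b // b ∈ A} => hA b.1 b.2
  refine ⟨A.attach.map g, fun x hx => ?_, ?_⟩
  · obtain ⟨b, -, rfl⟩ := mem_map.mp hx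
    exact hgs b
  rw [map_map, Function.comp_def]
  simp only [hgf]
  exact attach_map_val A

lemma Multiset.exists_fin_lift {α β : Type*} {f : α → β} {s : Set α} {A : Multiset β} {n : ℕ}
    (hcard : card A = n) (hA : ∀ b ∈ A, b ∈ f '' s) :
    ∃ a : Fin n → α, (∀ k, a k ∈ s) ∧ Finset.univ.val.map (fun k => f (a k)) = A := by
  obtain ⟨B, hBs, hBA⟩ := exists_map_eq_of_forall_mem_image hA
  obtain ⟨a, haB⟩ := B.exists_fin_map_eq (n := n) (by rw [← hcard, ← hBA, card_map])
  refine ⟨a, fun k => hBs _ (haB ▸ mem_map_of_mem a (Finset.mem_univ_val k)), ?_⟩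
  rw [← hBA, ← haB, map_map]
  rfl

lemma Polynomial.eval_eq_leadingCoeff_mul_prod_sub {K : Type*} [Field K] [IsAlgClosed K]
    {P : K[X]} {ι : Type*} [Fintype ι] {r : ι → K} (hr : Finset.univ.val.map r = P.roots)
    (x : K) : P.eval x = P.leadingCoeff * ∏ k, (x - r k) := by
  conv_lhs =>
    rw [← C_leadingCoeff_mul_prod_multiset_X_sub_C (IsAlgClosed.card_roots_eq_natDegree (p := P))]
  simp [← hr, eval_prod]

namespace ConformalPair

variable {Γ : Set ℂ} {φm φp : ℂ → ℂ}

lemma φm_mem (h : ConformalPair Γ φm φp) {z : ℂ} (hz : z ∈ sphere (0 : ℂ) 1) : φm z ∈ Γ :=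
  h.mapm ▸ mem_image_of_mem φm hz

lemma φp_mem (h : ConformalPair Γ φm φp) {w : ℂ} (hw : w ∈ sphere (0 : ℂ) 1) : φp w ∈ Γ :=
  h.mapp ▸ mem_image_of_mem φp hw

lemma φp_notMem_image_ball (h : ConformalPair Γ φm φp) {w : ℂ} (hw : 1 ≤ ‖w‖) :
    φp w ∉ φm '' ball 0 1 := by
  intro hmem
  rcases hw.lt_or_eq with hlt | heq
  · exact disjoint_left.mp h.disj_mp hmem (mem_image_of_mem φp hlt)
  · exact disjoint_left.mp h.disj_mG hmem (h.φp_mem (mem_sphere_zero_iff_norm.mpr heq.symm))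

end ConformalPair

theorem eks_forward_general (n : ℕ) (hn : 1 ≤ n) (P : ℂ[X]) (hdeg : P.natDegree = n)
    (φm φp : ℂ → ℂ)
    (hpair : ConformalPair {z : ℂ | ‖P.eval z‖ = 1} φm φp)
    (hroots : ∀ z : ℂ, P.eval z = 0 → z ∈ φm '' (ball 0 1)) :
    ∃ a : Fin n → ℂ, (∀ k, ‖a k‖ < 1) ∧
      (Finset.univ.val.map (fun k => φm (a k))) = P.roots ∧
      ∃ lam : ℂ, ‖lam‖ = 1 ∧
        ∀ z w : ℂ, ‖z‖ = 1 → ‖w‖ = 1 → φp w = φm z →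
          w ^ n = lam * ∏ k, (z - a k) / (1 - (starRingEnd ℂ) (a k) * z) := by
  have hP : P ≠ 0 := by rintro rfl; simp at hdeg; omega
  obtain ⟨a, ha, hφa⟩ := Multiset.exists_fin_lift (hdeg ▸ IsAlgClosed.card_roots_eq_natDegree)
    fun r hr => hroots r ((mem_roots hP).mp hr)
  have hPφa := eval_eq_leadingCoeff_mul_prod_sub hφa
  obtain ⟨lam, hlam, hinner⟩ := exists_prod_sub_eq_mul_blaschkeProduct hpair.contm hpair.injm
    hpair.holm ha (leadingCoeff_ne_zero.mpr hP) fun z hz => hPφa (φm z) ▸ hpair.φm_mem hz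
  obtain ⟨μ, hμ, houter⟩ := exists_eval_comp_eq_mul_pow hpair.contp hpair.holp hpair.deriv_infty
    (fun w hw hPw => hpair.φp_notMem_image_ball hw (hroots _ hPw)) fun w hw => hpair.φp_mem hw
  have hμ0 : μ ≠ 0 := by rintro rfl; simp at hμ
  refine ⟨a, fun k => mem_ball_zero_iff.mp (ha k), hφa, μ⁻¹ * lam, by simp [hμ, hlam],
    fun z w hz hw hφ => ?_⟩
  have h := houter w (mem_sphere_zero_iff_norm.mpr hw)
  rw [hφ, hPφa, hinner z (mem_closedBall_zero_iff.mpr hz.le), hdeg] at h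
  rw [mul_assoc, ← blaschkeProduct, h, inv_mul_cancel_left₀ hμ0]

/-- Forward direction of the Ebenfelt–Khavinson–Shapiro theorem:
the fingerprint `k` of an analytic connected polynomial lemniscate of degree `n`
satisfies `k(z)^n = B(z)` for a finite Blaschke product `B` of degree `n` whose
zeros are the preimages under `φ₋` of the roots of `P`. -/
theorem eks_forward (n : ℕ) (hn : 1 ≤ n) (P : ℂ[X]) (hdeg : P.natDegree = n)
    (hlead : ∃ c : ℝ, 0 < c ∧ P.leadingCoeff = (c : ℂ))
    (φm φp : ℂ → ℂ)
    (hpair : ConformalPair {z : ℂ | ‖P.eval z‖ = 1} φm φp)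
    (hroots : ∀ z : ℂ, P.eval z = 0 → z ∈ φm '' (ball 0 1)) :
    ∃ a : Fin n → ℂ, (∀ k, ‖a k‖ < 1) ∧
      (Finset.univ.val.map (fun k => φm (a k))) = P.roots ∧
      ∃ lam : ℂ, ‖lam‖ = 1 ∧
        ∀ z w : ℂ, ‖z‖ = 1 → ‖w‖ = 1 → φp w = φm z →
          w ^ n = lam * ∏ k, (z - a k) / (1 - (starRingEnd ℂ) (a k) * z) :=
  eks_forward_general n hn P hdeg φm φp hpair hroots
end

section
/- Uniqueness of a polynomial with a given lemniscate (the uniqueness assertion in the converse part of the Ebenfelt–Khavinson–Shapiro theorem, proved by the maximum modulus principle): Let n ≥ 1 and let P₁, P₂ ∈ ℂ[X] both have degree n and positive real leading coefficients. If the lemniscates coincide, i.e. {z ∈ ℂ : |P₁(z)| = 1} = {z ∈ ℂ : |P₂(z)| = 1}, then P₁ = P₂. -/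
/-!
The lemniscate of `Q` bounds the exterior domain `Ω = {|Q| > 1}`, on which `f = P / Q` is
holomorphic and tends to `a = lc P / lc Q` at infinity. If `{|Q| = 1} ⊆ {|P| = 1}`, then `|f| = 1`
on `∂Ω`, so by the maximum principle `|f| ≤ max 1 |a|` on `Ω`. When `|a| ≥ 1` this says that
`|f|` attains its maximum at the point at infinity, so `f` is constant and `P = a Q`. Comparing
the moduli at a point of the lemniscate gives `|a| = 1`, and positivity of the leading
coefficients gives `a = 1`. Equality of the two lemniscates lets us order the leading coefficients
either way.
-/

open Complex Polynomial Filter Bornology Metric Set Topology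

theorem Complex.eventually_eq_of_tendsto_cobounded_of_norm_le {E : Type*} [NormedAddCommGroup E]
    [NormedSpace ℂ E] [StrictConvexSpace ℝ E] [CompleteSpace E] {f : ℂ → E} {a : E}
    (hf : ∀ᶠ z in cobounded ℂ, DifferentiableAt ℂ f z) (hlim : Tendsto f (cobounded ℂ) (𝓝 a))
    (hle : ∀ᶠ z in cobounded ℂ, ‖f z‖ ≤ ‖a‖) : ∀ᶠ z in cobounded ℂ, f z = a := by
  -- `f` read in the chart `w ↦ w⁻¹` at infinity, with its limit filled in at `0`
  set g : ℂ → E := Function.update (fun w => f w⁻¹) 0 a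
  have hg : ∀ w ≠ 0, g w = f w⁻¹ := fun w hw => Function.update_of_ne hw _ _
  have hg0 : g 0 = a := Function.update_self _ _ _
  obtain ⟨r, hr, hball⟩ : ∃ r > 0, ∀ w ∈ ball (0 : ℂ) r, w ≠ 0 →
      DifferentiableAt ℂ f w⁻¹ ∧ ‖f w⁻¹‖ ≤ ‖a‖ :=
    Metric.eventually_nhds_iff_ball.mp <| eventually_nhdsWithin_iff.mp <|
      tendsto_inv₀_nhdsNE_zero.eventually (hf.and hle)
  have hgd : DifferentiableOn ℂ g (ball 0 r) := by
    refine (differentiableOn_compl_singleton_and_continuousAt_iff (ball_mem_nhds 0 hr)).mp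
      ⟨fun w hw => ?_, continuousAt_update_same.mpr (hlim.comp tendsto_inv₀_nhdsNE_zero)⟩
    have hw0 : w ≠ 0 := hw.2
    refine DifferentiableAt.differentiableWithinAt ?_
    refine ((hball w hw.1 hw0).1.comp w (differentiableAt_inv hw0)).congr_of_eventuallyEq ?_
    filter_upwards [isOpen_ne.mem_nhds hw0] with v hv using hg v hv
  have hmax : IsMaxOn (norm ∘ g) (ball 0 r) 0 := fun w hw => by
    rcases eq_or_ne w 0 with rfl | hw0
    · exact le_refl (‖g 0‖)
    · simpa [hg w hw0, hg0] using (hball w hw hw0).2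
  have hconst := Complex.eqOn_of_isPreconnected_of_isMaxOn_norm (convex_ball 0 r).isPreconnected
    isOpen_ball hgd (mem_ball_self hr) hmax
  filter_upwards [tendsto_inv₀_cobounded.eventually (ball_mem_nhds 0 hr),
    eventually_ne_cobounded 0] with z hz hz0
  simpa [hg z⁻¹ (inv_ne_zero hz0), hg0] using hconst hz

theorem Complex.norm_le_max_of_forall_mem_frontier_norm_le_of_tendsto {E : Type*}
    [NormedAddCommGroup E] [NormedSpace ℂ E] {f : ℂ → E} {U : Set ℂ} {a : E} {C : ℝ}
    (hf : DifferentiableOn ℂ f (closure U)) (hC : ∀ z ∈ frontier U, ‖f z‖ ≤ C)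
    (hlim : Tendsto f (cobounded ℂ) (𝓝 a)) {z : ℂ} (hz : z ∈ U) : ‖f z‖ ≤ max C ‖a‖ := by
  refine le_of_forall_pos_le_add fun ε hε => ?_
  obtain ⟨R, hR⟩ : ∃ R, ∀ w : ℂ, R ≤ ‖w‖ → ‖f w‖ ≤ ‖a‖ + ε := by
    have := hlim.norm.eventually (eventually_le_nhds (lt_add_of_pos_right ‖a‖ hε))
    rw [← comap_norm_atTop, eventually_comap] at this
    obtain ⟨R, hR⟩ := this.exists_forall_of_atTop
    exact ⟨R, fun w hw => hR ‖w‖ hw w rfl⟩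
  set R' := max R (‖z‖ + 1)
  have hR' : 0 < R' := lt_max_of_lt_right (by positivity)
  have hbound : ∀ w ∈ frontier (U ∩ ball 0 R'), ‖f w‖ ≤ max C ‖a‖ + ε := by
    intro w hw
    rcases frontier_inter_subset U (ball 0 R') hw with ⟨hwU, -⟩ | ⟨-, hwR⟩
    · exact (hC w hwU).trans (by linarith [le_max_left C ‖a‖])
    · rw [frontier_ball 0 hR'.ne', mem_sphere_zero_iff_norm] at hwR
      exact (hR w (hwR ▸ le_max_left _ _)).trans (by linarith [le_max_right C ‖a‖])
  refine norm_le_of_forall_mem_frontier_norm_le (isBounded_ball.subset inter_subset_right)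
    (hf.mono (closure_mono inter_subset_left)).diffContOnCl hbound (subset_closure ⟨hz, ?_⟩)
  exact mem_ball_zero_iff.mpr (lt_max_of_lt_right (lt_add_one ‖z‖))

theorem Polynomial.eq_of_eventually_eval_eq_cobounded {𝕜 : Type*} [NontriviallyNormedField 𝕜]
    {p q : 𝕜[X]} (h : ∀ᶠ z in cobounded 𝕜, p.eval z = q.eval z) : p = q :=
  eq_of_infinite_eval_eq p q <| frequently_cofinite_iff_infinite.mp <|
    h.frequently.filter_mono (le_cofinite 𝕜)

theorem Polynomial.tendsto_eval_div_eval_cobounded {𝕜 : Type*} [NormedField 𝕜] {p q : 𝕜[X]}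
    (hdeg : p.natDegree = q.natDegree) :
    Tendsto (fun z => p.eval z / q.eval z) (cobounded 𝕜)
      (𝓝 (p.leadingCoeff / q.leadingCoeff)) := by
  have hlead := isEquivalent_cobounded_leading_monomial (P := p) |>.div
    (isEquivalent_cobounded_leading_monomial (P := q))
  refine hlead.symm.tendsto_nhds (tendsto_const_nhds.congr' ?_)
  filter_upwards [eventually_ne_cobounded 0] with z hz
  simp [hdeg, mul_div_mul_right _ _ (pow_ne_zero _ hz)]

theorem Polynomial.eq_C_mul_of_lemniscate_subset {P Q : ℂ[X]} (hdeg : P.natDegree = Q.natDegree)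
    (hQ : 0 < Q.degree) (hsub : {z | ‖Q.eval z‖ = 1} ⊆ {z | ‖P.eval z‖ = 1})
    (hlc : ‖Q.leadingCoeff‖ ≤ ‖P.leadingCoeff‖) :
    P = C (P.leadingCoeff / Q.leadingCoeff) * Q := by
  set Ω := {z | 1 < ‖Q.eval z‖}
  have hQc : Continuous fun z => ‖Q.eval z‖ := by fun_prop
  have hQne : ∀ z ∈ closure Ω, Q.eval z ≠ 0 := fun z hz h0 => by
    have h1 := closure_lt_subset_le continuous_const hQc hz
    norm_num [h0] at h1
  have hdiff : DifferentiableOn ℂ (fun z => P.eval z / Q.eval z) (closure Ω) :=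
    P.differentiable.differentiableOn.div Q.differentiable.differentiableOn hQne
  have hfr : ∀ z ∈ frontier Ω, ‖P.eval z / Q.eval z‖ ≤ 1 := fun z hz => by
    have hQz : ‖Q.eval z‖ = 1 := (frontier_lt_subset_eq continuous_const hQc hz).symm
    have hPz : ‖P.eval z‖ = 1 := hsub hQz
    simp [hQz, hPz]
  have hlim := tendsto_eval_div_eval_cobounded hdeg
  have hQlc : Q.leadingCoeff ≠ 0 := leadingCoeff_ne_zero.mpr (ne_zero_of_degree_gt hQ)
  have hlc_ratio : 1 ≤ ‖P.leadingCoeff / Q.leadingCoeff‖ := by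
    rwa [norm_div, one_le_div (norm_pos_iff.mpr hQlc)]
  have hΩ : ∀ᶠ z in cobounded ℂ, z ∈ Ω :=
    (Q.tendsto_norm_atTop hQ tendsto_norm_cobounded_atTop).eventually_gt_atTop 1
  have hbound : ∀ z ∈ Ω, ‖P.eval z / Q.eval z‖ ≤ ‖P.leadingCoeff / Q.leadingCoeff‖ := fun z hz =>
    (Complex.norm_le_max_of_forall_mem_frontier_norm_le_of_tendsto hdiff hfr hlim hz).trans_eq
      (max_eq_right hlc_ratio)
  have hconst :=
    Complex.eventually_eq_of_tendsto_cobounded_of_norm_le (f := fun z => P.eval z / Q.eval z)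
    (hΩ.mono fun z hz => P.differentiableAt.div Q.differentiableAt (hQne z (subset_closure hz)))
    hlim (hΩ.mono hbound)
  refine eq_of_eventually_eval_eq_cobounded ?_
  filter_upwards [hconst, hΩ] with z hz hzΩ
  rw [eval_mul, eval_C, ← hz, div_mul_cancel₀ _ (hQne z (subset_closure hzΩ))]

theorem Polynomial.eq_of_lemniscate_subset {P Q : ℂ[X]} {cP cQ : ℝ}
    (hdeg : P.natDegree = Q.natDegree) (hQ : 0 < Q.degree)
    (hsub : {z | ‖Q.eval z‖ = 1} ⊆ {z | ‖P.eval z‖ = 1}) (hcQ : 0 < cQ)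
    (hPlc : P.leadingCoeff = cP) (hQlc : Q.leadingCoeff = cQ) (hc : cQ ≤ cP) : P = Q := by
  have hcP : 0 < cP := hcQ.trans_le hc
  have hPQ := eq_C_mul_of_lemniscate_subset hdeg hQ hsub <| by
    simpa [hPlc, hQlc, abs_of_pos hcQ, abs_of_pos hcP] using hc
  rw [hPlc, hQlc, ← ofReal_div] at hPQ
  obtain ⟨z, hz⟩ := exists_root (f := Q - C 1) (by rwa [degree_sub_C hQ])
  have hQz : Q.eval z = 1 := by simpa [sub_eq_zero] using hz
  have hPz : ‖P.eval z‖ = 1 := hsub (by simp [hQz])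
  rw [hPQ, eval_mul, eval_C, hQz, mul_one, norm_real,
    Real.norm_of_nonneg (div_pos hcP hcQ).le] at hPz
  rw [hPQ, hPz, ofReal_one, C_1, one_mul]

/-- Uniqueness of a polynomial with a given lemniscate: two polynomials of the
same degree `n ≥ 1` with positive real leading coefficients and the same
lemniscate `{z : |P(z)| = 1}` must be equal. -/
theorem lemniscate_polynomial_unique (n : ℕ) (hn : 1 ≤ n) (P₁ P₂ : ℂ[X])
    (hdeg1 : P₁.natDegree = n) (hdeg2 : P₂.natDegree = n)
    (hlead1 : ∃ c : ℝ, 0 < c ∧ P₁.leadingCoeff = (c : ℂ))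
    (hlead2 : ∃ c : ℝ, 0 < c ∧ P₂.leadingCoeff = (c : ℂ))
    (hset : {z : ℂ | ‖P₁.eval z‖ = 1} = {z : ℂ | ‖P₂.eval z‖ = 1}) :
    P₁ = P₂ := by
  obtain ⟨c₁, hc₁, hlc₁⟩ := hlead1
  obtain ⟨c₂, hc₂, hlc₂⟩ := hlead2
  have hdeg : P₁.natDegree = P₂.natDegree := hdeg1.trans hdeg2.symm
  have hpos : ∀ P : ℂ[X], P.natDegree = n → 0 < P.degree := fun P hP =>
    natDegree_pos_iff_degree_pos.mp (hP ▸ hn)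
  rcases le_total c₂ c₁ with h | h
  · exact eq_of_lemniscate_subset hdeg (hpos P₂ hdeg2) hset.ge hc₂ hlc₁ hlc₂ h
  · exact (eq_of_lemniscate_subset hdeg.symm (hpos P₁ hdeg1) hset.le hc₁ hlc₂ hlc₁ h).symm
end

section
/- Lemniscates are trajectories of the associated quadratic differential: let f : ℂ → ℂ, γ : ℝ → ℂ, t₀ ∈ ℝ, and c > 0. Assume f is complex-differentiable at γ(t₀), γ is differentiable at t₀, |f(γ(t))| = c for all t in some neighborhood of t₀, and moreover γ'(t₀) ≠ 0 and f'(γ(t₀)) ≠ 0. Then the complex number −(1/(4π²))·( (f'(γ(t₀))/f(γ(t₀))) · γ'(t₀) )² is a positive real number; that is, Q_f(γ(t₀))·(γ'(t₀))² > 0, so the arc γ is tangent at t₀ to a trajectory of the quadratic differential Q_f. -/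
/-!
Along the arc, `‖f ∘ γ‖² = c²` is constant, so the velocity `(f ∘ γ)' = f'(γ) γ'` is orthogonal
to `f ∘ γ`. Hence `(f'/f)(γ) γ' = (f ∘ γ)' / (f ∘ γ)` is purely imaginary, and nonzero, so minus
its square is a positive real.
-/

open Complex

open scoped RealInnerProductSpace Topology

theorem HasDerivAt.inner_eq_zero_of_norm_eventually_eq {F : Type*} [NormedAddCommGroup F]
    [InnerProductSpace ℝ F] {f : ℝ → F} {f' : F} {x c : ℝ} (hf : HasDerivAt f f' x)
    (hc : ∀ᶠ t in 𝓝 x, ‖f t‖ = c) : ⟪f x, f'⟫ = 0 := by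
  have hconst : HasDerivAt (‖f ·‖ ^ 2) 0 x :=
    (hasDerivAt_const x (c ^ 2)).congr_of_eventuallyEq (hc.mono fun t ht => by simp only [ht])
  simpa using hf.norm_sq.unique hconst

theorem Complex.div_re_eq_inner_div_normSq (w z : ℂ) : (w / z).re = ⟪z, w⟫ / normSq z := by
  rw [Complex.inner, div_re, mul_re, conj_re, conj_im]
  ring

theorem Complex.neg_sq_eq_im_sq_of_re_eq_zero {w : ℂ} (hw : w.re = 0) :
    -w ^ 2 = ((w.im ^ 2 : ℝ) : ℂ) := by
  conv_lhs => rw [← re_add_im w, hw]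
  push_cast
  ring_nf
  rw [I_sq]
  ring

/-- Lemniscates are trajectories of the quadratic differential
`Q_f(z)dz² = −(1/(4π²))·(f'(z)/f(z))²·dz²`: along a differentiable arc lying in
a level set of `|f|` with nonvanishing tangent and `f' ≠ 0`, the quantity
`Q_f(γ(t₀))·(γ'(t₀))²` is a positive real number. -/
theorem lemniscate_is_trajectory (f : ℂ → ℂ) (γ : ℝ → ℂ) (t₀ : ℝ) (c : ℝ)
    (hc : 0 < c)
    (hf : DifferentiableAt ℂ f (γ t₀)) (hγ : DifferentiableAt ℝ γ t₀)
    (hlevel : ∀ᶠ t in nhds t₀, ‖f (γ t)‖ = c)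
    (hγ' : deriv γ t₀ ≠ 0) (hf' : deriv f (γ t₀) ≠ 0) :
    ∃ r : ℝ, 0 < r ∧
      -(1 / (4 * (Real.pi : ℂ) ^ 2)) *
        ((deriv f (γ t₀) / f (γ t₀)) * deriv γ t₀) ^ 2 = (r : ℂ) := by
  have hf₀ : f (γ t₀) ≠ 0 := fun h => hc.ne (by simpa [h] using hlevel.self_of_nhds)
  have hderiv : HasDerivAt (fun t => f (γ t)) (deriv f (γ t₀) * deriv γ t₀) t₀ :=
    hf.hasDerivAt.comp t₀ hγ.hasDerivAt
  set w := deriv f (γ t₀) / f (γ t₀) * deriv γ t₀ with hw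
  have hw_re : w.re = 0 := by
    rw [hw, div_mul_eq_mul_div, div_re_eq_inner_div_normSq,
      hderiv.inner_eq_zero_of_norm_eventually_eq hlevel, zero_div]
  have hw_im : w.im ≠ 0 := fun h =>
    mul_ne_zero (div_ne_zero hf' hf₀) hγ' (Complex.ext hw_re h)
  refine ⟨w.im ^ 2 / (4 * Real.pi ^ 2), by positivity, ?_⟩
  rw [neg_mul, ← mul_neg, neg_sq_eq_im_sq_of_re_eq_zero hw_re]
  push_cast
  ring
end
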